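/- Let c > 0 and π̂ ∈ (0,1). Then the free boundary problem — find f : [π̂,1] → ℝ and π* ∈ (π̂,1) with (1/2)[x(1-x)]²f''(x) = -c on (π̂,π*), f(x) = 1-x on [π*,1], f'(π̂) = 0, and f'(π*) = -1 — has a unique solution, given by f(x) = 2c(1-2x)·log(x/(1-x)) + Āx + B̄ on [π̂,π*] with Ā = -Ψ'(π̂) and B̄ chosen so that f(π*) = 1 - π*. -/

import Mathlib

/-!
With `Ψ = psi c`, one has `Ψ'' = -2c/(x(1-x))²`, so `Ψ` solves the ODE and on `[π̂, π*]` every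
solution differs from `Ψ` by an affine function. The condition `f'(π̂) = 0` fixes its slope as
`-Ψ'(π̂)` and `f(π*) = 1 - π*` fixes its constant term, after which `f'(π*) = -1` reads
`Ψ'(π*) = Ψ'(π̂) - 1`. Since `Ψ'` is strictly decreasing on `(0,1)` and tends to `-∞` at `1`,
this equation has exactly one root `π* ∈ (π̂, 1)`, which gives both existence and uniqueness.
-/

/-- A solution of the free boundary problem of the paper: `f` is `C¹` on `[πh,1]`,
satisfies the ODE `(1/2)[x(1-x)]² f'' = -c` on `(πh,πs)`, equals `1-x` on `[πs,1]`,
with `f'(πh) = 0` and `f'(πs) = -1`. -/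
def IsFBSolution (c πh : ℝ) (f : ℝ → ℝ) (πs : ℝ) : Prop :=
  πs ∈ Set.Ioo πh 1 ∧
  (∀ x ∈ Set.Icc πh 1, DifferentiableAt ℝ f x) ∧
  (∀ x ∈ Set.Ioo πh πs, (1/2) * (x*(1-x))^2 * deriv (deriv f) x = -c) ∧
  (∀ x ∈ Set.Icc πs 1, f x = 1 - x) ∧
  deriv f πh = 0 ∧ deriv f πs = -1

open Set Filter Topology Real

section Calculus

variable {f g u : ℝ → ℝ} {a b x d : ℝ}

theorem exists_eqOn_add_linear_of_hasDerivAt_deriv (hab : a < b)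
    (hf : ∀ x ∈ Icc a b, DifferentiableAt ℝ f x) (hg : ∀ x ∈ Icc a b, DifferentiableAt ℝ g x)
    (hf'' : ∀ x ∈ Ioo a b, HasDerivAt (deriv f) (u x) x)
    (hg'' : ∀ x ∈ Ioo a b, HasDerivAt (deriv g) (u x) x) :
    ∃ k C, EqOn f (fun x => g x + k * x + C) (Icc a b) := by
  have hf_Ioo x (hx : x ∈ Ioo a b) := hf x (Ioo_subset_Icc_self hx)
  have hg_Ioo x (hx : x ∈ Ioo a b) := hg x (Ioo_subset_Icc_self hx)
  obtain ⟨k, hk⟩ := isOpen_Ioo.exists_eq_add_of_deriv_eq isPreconnected_Ioo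
    (fun x hx => (hf'' x hx).differentiableAt.differentiableWithinAt)
    (fun x hx => (hg'' x hx).differentiableAt.differentiableWithinAt)
    (fun x hx => (hf'' x hx).deriv.trans (hg'' x hx).deriv.symm)
  have hgk (x : ℝ) (hx : x ∈ Ioo a b) :
      HasDerivAt (fun y => g y + k * y) (deriv g x + k) x :=
    ((hg_Ioo x hx).hasDerivAt.add ((hasDerivAt_id' x).const_mul k)).congr_deriv (by ring)
  obtain ⟨C, hC⟩ := isOpen_Ioo.exists_eq_add_of_deriv_eq isPreconnected_Ioo
    (fun x hx => (hf_Ioo x hx).differentiableWithinAt)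
    (fun x hx => (hgk x hx).differentiableAt.differentiableWithinAt)
    (fun x hx => (hk hx).trans (hgk x hx).deriv.symm)
  refine ⟨k, C, hC.of_subset_closure ?_ ?_ Ioo_subset_Icc_self (closure_Ioo hab.ne).ge⟩
  · exact fun x hx => (hf x hx).continuousAt.continuousWithinAt
  · exact fun x hx => (((hg x hx).add (differentiableAt_id.const_mul k)).add_const C)
      |>.continuousAt.continuousWithinAt

theorem deriv_eq_of_eqOn_Icc (hab : a < b) (h : EqOn f g (Icc a b)) (hx : x ∈ Icc a b)
    (hf : DifferentiableAt ℝ f x) (hg : DifferentiableAt ℝ g x) : deriv f x = deriv g x := by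
  rw [← hf.derivWithin (uniqueDiffOn_Icc hab x hx), ← hg.derivWithin (uniqueDiffOn_Icc hab x hx)]
  exact derivWithin_congr h (h hx)

theorem hasDerivAt_ite_le (hf : HasDerivAt f d a) (hg : HasDerivAt g d a) (h : f a = g a) :
    HasDerivAt (fun x => if x ≤ a then f x else g x) d a := by
  have hle : HasDerivWithinAt (fun x => if x ≤ a then f x else g x) d (Iic a) a :=
    hf.hasDerivWithinAt.congr (fun x hx => if_pos hx) (if_pos le_rfl)
  have hge : HasDerivWithinAt (fun x => if x ≤ a then f x else g x) d (Ici a) a := by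
    refine hg.hasDerivWithinAt.congr (fun x hx => ?_) (by simp [h])
    rcases (mem_Ici.mp hx).eq_or_lt with rfl | hlt
    · simp [h]
    · simp [not_le.mpr hlt]
  simpa [Iic_union_Ici] using hle.union hge

end Calculus

section Psi

variable {c x : ℝ}

noncomputable def psi (c x : ℝ) : ℝ := 2 * c * (1 - 2 * x) * log (x / (1 - x))

noncomputable def psi' (c x : ℝ) : ℝ :=
  -4 * c * log (x / (1 - x)) + 2 * c * (1 - 2 * x) / (x * (1 - x))

theorem hasDerivAt_log_div_one_sub (hx : x ∈ Ioo (0 : ℝ) 1) :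
    HasDerivAt (fun y => log (y / (1 - y))) (1 / (x * (1 - x))) x := by
  have hx0 : x ≠ 0 := hx.1.ne'
  have hx1 : 1 - x ≠ 0 := (sub_pos.mpr hx.2).ne'
  have hdiv : HasDerivAt (fun y => y / (1 - y)) (1 / (1 - x) ^ 2) x :=
    ((hasDerivAt_id' x).div ((hasDerivAt_id' x).const_sub 1) hx1).congr_deriv (by ring)
  refine (hdiv.log (div_ne_zero hx0 hx1)).congr_deriv ?_
  field_simp

theorem hasDerivAt_psi (c : ℝ) (hx : x ∈ Ioo (0 : ℝ) 1) : HasDerivAt (psi c) (psi' c x) x := by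
  have hx0 : x ≠ 0 := hx.1.ne'
  have hx1 : 1 - x ≠ 0 := (sub_pos.mpr hx.2).ne'
  have hlin := (((hasDerivAt_id' x).const_mul 2).const_sub 1).const_mul (2 * c)
  refine (hlin.mul (hasDerivAt_log_div_one_sub hx)).congr_deriv ?_
  simp only [psi']
  field_simp
  ring

theorem hasDerivAt_psi' (c : ℝ) (hx : x ∈ Ioo (0 : ℝ) 1) :
    HasDerivAt (psi' c) (-2 * c / (x * (1 - x)) ^ 2) x := by
  have hx0 : x ≠ 0 := hx.1.ne'
  have hx1 : 1 - x ≠ 0 := (sub_pos.mpr hx.2).ne'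
  have hlog := (hasDerivAt_log_div_one_sub hx).const_mul (-4 * c)
  have hnum := (((hasDerivAt_id' x).const_mul 2).const_sub 1).const_mul (2 * c)
  have hden : HasDerivAt (fun y => y * (1 - y)) (1 - 2 * x) x :=
    ((hasDerivAt_id' x).mul ((hasDerivAt_id' x).const_sub 1)).congr_deriv (by ring)
  refine (hlog.add (hnum.div hden (mul_ne_zero hx0 hx1))).congr_deriv ?_
  field_simp
  ring

theorem hasDerivAt_deriv_psi (c : ℝ) (hx : x ∈ Ioo (0 : ℝ) 1) :
    HasDerivAt (deriv (psi c)) (-2 * c / (x * (1 - x)) ^ 2) x := by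
  refine (hasDerivAt_psi' c hx).congr_of_eventuallyEq ?_
  filter_upwards [isOpen_Ioo.mem_nhds hx] with y hy using (hasDerivAt_psi c hy).deriv

theorem strictAntiOn_psi' (hc : 0 < c) : StrictAntiOn (psi' c) (Ioo 0 1) := by
  refine strictAntiOn_of_deriv_neg (convex_Ioo 0 1)
    (fun x hx => (hasDerivAt_psi' c hx).continuousAt.continuousWithinAt) fun x hx => ?_
  rw [interior_Ioo] at hx
  have : 0 < x * (1 - x) := mul_pos hx.1 (sub_pos.mpr hx.2)
  rw [(hasDerivAt_psi' c hx).deriv]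
  exact div_neg_of_neg_of_pos (by linarith) (by positivity)

theorem tendsto_psi'_atBot (hc : 0 < c) : Tendsto (psi' c) (𝓝[<] 1) atBot := by
  have hsub : Tendsto (fun x : ℝ => 1 - x) (𝓝[<] 1) (𝓝[>] 0) := by
    refine tendsto_nhdsWithin_iff.mpr
      ⟨?_, eventually_nhdsWithin_of_forall fun x (hx : x < 1) => sub_pos.mpr hx⟩
    simpa using ((tendsto_const_nhds (x := (1 : ℝ))).sub (tendsto_id (x := 𝓝 1))).mono_left
      (nhdsWithin_le_nhds (s := Iio 1))
  have hodds : Tendsto (fun x : ℝ => x / (1 - x)) (𝓝[<] 1) atTop := by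
    simpa [div_eq_mul_inv] using
      (tendsto_id.mono_left nhdsWithin_le_nhds).pos_mul_atTop one_pos
        (tendsto_inv_nhdsGT_zero.comp hsub)
  have hlog := (tendsto_log_atTop.comp hodds).const_mul_atTop (by linarith : 0 < 4 * c)
  refine tendsto_atBot_mono' _ ?_ (tendsto_neg_atTop_atBot.comp hlog)
  filter_upwards [Ioo_mem_nhdsLT_of_mem (show (1 : ℝ) ∈ Ioc (1 / 2) 1 by norm_num)] with x hx
  -- Past `1/2` the rational term of `psi'` is nonpositive.
  have : 2 * c * (1 - 2 * x) / (x * (1 - x)) ≤ 0 :=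
    div_nonpos_of_nonpos_of_nonneg (by nlinarith [hx.1]) (by nlinarith [hx.1, hx.2])
  simp only [psi', Function.comp_apply]
  linarith

theorem exists_psi'_eq_sub_one (hc : 0 < c) {πh : ℝ} (hπ : πh ∈ Ioo (0 : ℝ) 1) :
    ∃ πs ∈ Ioo πh 1, psi' c πs = psi' c πh - 1 := by
  obtain ⟨b, hb, hbπ⟩ := (((tendsto_psi'_atBot hc).eventually_lt_atBot (psi' c πh - 1)).and
    (Ioo_mem_nhdsLT_of_mem ⟨hπ.2, le_rfl⟩)).exists
  have hcont : ContinuousOn (psi' c) (Icc πh b) := fun x hx =>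
    (hasDerivAt_psi' c ⟨hπ.1.trans_le hx.1, hx.2.trans_lt hbπ.2⟩).continuousAt.continuousWithinAt
  obtain ⟨πs, hπs, hval⟩ :=
    intermediate_value_Icc' hbπ.1.le hcont ⟨hb.le, by linarith⟩
  refine ⟨πs, ⟨hπs.1.lt_of_ne ?_, hπs.2.trans_lt hbπ.2⟩, hval⟩
  rintro rfl
  linarith

end Psi

namespace IsFBSolution

variable {c πh πs σs : ℝ} {f g : ℝ → ℝ}

theorem psi'_eq_and_eqOn (hc : 0 < c) (hπ : 0 < πh) (hs : IsFBSolution c πh f πs) :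
    psi' c πs = psi' c πh - 1 ∧
      ∃ C, EqOn f (fun x => psi c x - psi' c πh * x + C) (Icc πh πs) := by
  obtain ⟨hπs, hdiff, hode, -, hd0, hd1⟩ := hs
  have hunit : Icc πh πs ⊆ Ioo 0 1 := fun x hx => ⟨hπ.trans_le hx.1, hx.2.trans_lt hπs.2⟩
  have hdiff' : ∀ x ∈ Icc πh πs, DifferentiableAt ℝ f x :=
    fun x hx => hdiff x ⟨hx.1, hx.2.trans hπs.2.le⟩
  -- The ODE makes `deriv (deriv f)` nonzero, so it is not a junk value and `deriv f` is
  -- differentiable there.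
  have hf'' : ∀ x ∈ Ioo πh πs, HasDerivAt (deriv f) (-2 * c / (x * (1 - x)) ^ 2) x := by
    intro x hx
    have hx01 := hunit (Ioo_subset_Icc_self hx)
    have hpos : 0 < x * (1 - x) := mul_pos hx01.1 (sub_pos.mpr hx01.2)
    have hval : deriv (deriv f) x = -2 * c / (x * (1 - x)) ^ 2 := by
      rw [eq_div_iff (by positivity)]
      linarith [hode x hx]
    have hne : deriv (deriv f) x ≠ 0 := by
      rw [hval]
      exact div_ne_zero (by linarith) (by positivity)
    exact hval ▸ (differentiableAt_of_deriv_ne_zero hne).hasDerivAt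
  obtain ⟨k, C, hfC⟩ := exists_eqOn_add_linear_of_hasDerivAt_deriv hπs.1 hdiff'
    (fun x hx => (hasDerivAt_psi c (hunit hx)).differentiableAt) hf''
    (fun x hx => hasDerivAt_deriv_psi c (hunit (Ioo_subset_Icc_self hx)))
  have hF' : ∀ x ∈ Icc πh πs, HasDerivAt (fun x => psi c x + k * x + C) (psi' c x + k) x :=
    fun x hx => (((hasDerivAt_psi c (hunit hx)).add ((hasDerivAt_id' x).const_mul k)).add_const
      C).congr_deriv (by ring)
  have hderiv : ∀ x ∈ Icc πh πs, deriv f x = psi' c x + k := fun x hx =>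
    (deriv_eq_of_eqOn_Icc hπs.1 hfC hx (hdiff' x hx) (hF' x hx).differentiableAt).trans
      (hF' x hx).deriv
  have hk : k = -psi' c πh := by linarith [hderiv πh (left_mem_Icc.mpr hπs.1.le)]
  refine ⟨by linarith [hderiv πs (right_mem_Icc.mpr hπs.1.le)], C, fun x hx => ?_⟩
  rw [hfC hx, hk]
  ring

theorem unique (hc : 0 < c) (hπ : 0 < πh) (hf : IsFBSolution c πh f πs)
    (hg : IsFBSolution c πh g σs) : πs = σs ∧ EqOn f g (Icc πh 1) := by
  obtain ⟨hfψ, C, hfC⟩ := hf.psi'_eq_and_eqOn hc hπ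
  obtain ⟨hgψ, D, hgD⟩ := hg.psi'_eq_and_eqOn hc hπ
  have hπσ : πs = σs := (strictAntiOn_psi' hc).injOn ⟨hπ.trans hf.1.1, hf.1.2⟩
    ⟨hπ.trans hg.1.1, hg.1.2⟩ (hfψ.trans hgψ.symm)
  subst hπσ
  have hπs : πs ∈ Icc πh πs := right_mem_Icc.mpr hf.1.1.le
  have htail : EqOn f g (Icc πs 1) := fun x hx => (hf.2.2.2.1 x hx).trans (hg.2.2.2.1 x hx).symm
  have hCD : C = D := by
    have := htail (left_mem_Icc.mpr hf.1.2.le)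
    rw [hfC hπs, hgD hπs] at this
    linarith
  refine ⟨rfl, fun x hx => ?_⟩
  rcases le_total x πs with hle | hge
  · rw [hfC ⟨hx.1, hle⟩, hgD ⟨hx.1, hle⟩, hCD]
  · exact htail ⟨hge, hx.2⟩

end IsFBSolution

theorem isFBSolution_of_psi'_eq {c πh πs : ℝ} (hπ : 0 < πh) (hπs : πs ∈ Ioo πh 1)
    (hψ : psi' c πs = psi' c πh - 1) :
    IsFBSolution c πh (fun x => if x ≤ πs then
      psi c x + (-(psi' c πh)) * x + (1 - πs - psi c πs + psi' c πh * πs) else 1 - x) πs := by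
  set F : ℝ → ℝ := fun x => psi c x + (-(psi' c πh)) * x + (1 - πs - psi c πs + psi' c πh * πs)
  have hF' : ∀ x ∈ Ioo (0 : ℝ) 1, HasDerivAt F (psi' c x - psi' c πh) x := fun x hx =>
    (((hasDerivAt_psi c hx).add ((hasDerivAt_id' x).const_mul _)).add_const _).congr_deriv
      (by ring)
  have hF'' : ∀ x ∈ Ioo (0 : ℝ) 1, HasDerivAt (deriv F) (-2 * c / (x * (1 - x)) ^ 2) x := by
    intro x hx
    refine ((hasDerivAt_psi' c hx).sub_const (psi' c πh)).congr_of_eventuallyEq ?_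
    filter_upwards [isOpen_Ioo.mem_nhds hx] with y hy using (hF' y hy).deriv
  have hline (x : ℝ) : HasDerivAt (fun y : ℝ => 1 - y) (-1) x :=
    ((hasDerivAt_id' x).const_sub 1).congr_deriv rfl
  have hF_πs : F πs = 1 - πs := by simp only [F]; ring
  have hπs01 : πs ∈ Ioo (0 : ℝ) 1 := ⟨hπ.trans hπs.1, hπs.2⟩
  have hjoin := hasDerivAt_ite_le ((hF' πs hπs01).congr_deriv (by rw [hψ]; ring)) (hline πs) hF_πs
  have hleft : ∀ x < πs, (fun y => if y ≤ πs then F y else 1 - y) =ᶠ[𝓝 x] F := fun x hx => by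
    filter_upwards [Iio_mem_nhds hx] with y hy using if_pos (le_of_lt hy)
  have hright : ∀ x, πs < x → (fun y => if y ≤ πs then F y else 1 - y) =ᶠ[𝓝 x] (1 - ·) :=
    fun x hx => by filter_upwards [Ioi_mem_nhds hx] with y hy using if_neg (not_le.mpr hy)
  refine ⟨hπs, fun x hx => ?_, fun x hx => ?_, fun x hx => ?_, ?_, hjoin.deriv⟩
  · rcases lt_trichotomy x πs with hlt | rfl | hgt
    · exact (hleft x hlt).differentiableAt_iff.mpr
        (hF' x ⟨hπ.trans_le hx.1, hlt.trans hπs.2⟩).differentiableAt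
    · exact hjoin.differentiableAt
    · exact (hright x hgt).differentiableAt_iff.mpr (hline x).differentiableAt
  · have hx01 : x ∈ Ioo (0 : ℝ) 1 := ⟨hπ.trans hx.1, hx.2.trans hπs.2⟩
    have hne : (x * (1 - x)) ^ 2 ≠ 0 := (pow_pos (mul_pos hx01.1 (sub_pos.mpr hx01.2)) 2).ne'
    rw [(hleft x hx.2).deriv.deriv_eq, (hF'' x hx01).deriv]
    generalize (x * (1 - x)) ^ 2 = P at hne ⊢
    field_simp
  · rcases hx.1.eq_or_lt with rfl | hlt
    · exact (if_pos le_rfl).trans hF_πs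
    · exact if_neg (not_le.mpr hlt)
  · rw [(hleft πh hπs.1).deriv_eq, (hF' πh ⟨hπ, hπs.1.trans hπs.2⟩).deriv, sub_self]

theorem stmt7 (c : ℝ) (hc : 0 < c) (πh : ℝ) (hπ : πh ∈ Set.Ioo (0:ℝ) 1) :
    (∃ πs B : ℝ, IsFBSolution c πh
      (fun x => if x ≤ πs then
          2*c*(1-2*x)*Real.log (x/(1-x))
            + (-(deriv (fun y : ℝ => 2*c*(1-2*y)*Real.log (y/(1-y))) πh)) * x + B
        else 1 - x) πs) ∧
    (∀ (f g : ℝ → ℝ) (πs σs : ℝ),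
      IsFBSolution c πh f πs → IsFBSolution c πh g σs →
        πs = σs ∧ ∀ x ∈ Set.Icc πh 1, f x = g x) := by
  have hA : deriv (fun y : ℝ => 2*c*(1-2*y)*Real.log (y/(1-y))) πh = psi' c πh :=
    (hasDerivAt_psi c hπ).deriv
  obtain ⟨πs, hπs, hψ⟩ := exists_psi'_eq_sub_one hc hπ
  rw [hA]
  exact ⟨⟨πs, _, isFBSolution_of_psi'_eq hπ.1 hπs hψ⟩,
    fun f g πs σs hf hg => hf.unique hc hπ.1 hg⟩
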